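/- arXiv:1106.3822 — 5 statements merged into one kernel-verified Lean document; each statement's English description precedes it below -/
import Mathlib

section
/- Let (W, S) be a Coxeter system, let γ = (t₀, …, t_n) be a sequence in S with each m(t_{i-1}, t_i) odd, and let u ∈ S with m(t_n, u) = 2λ even and finite. Then r_{γ,u} := p_γ · u(t_n u)^{λ-1} · p_γ⁻¹ is an involution in W that commutes with t₀. -/
/-!
In a dihedral group generated by involutions `x, y`, if `x y` has odd order `2l + 1` then
`(y x)^l` conjugates `x` into `y`; chaining these conjugations along `γ` gives
`p_γ⁻¹ t₀ p_γ = t_n`. If instead `x y` has order `2λ`, then `y (x y)^(λ-1)` is a reflection of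
the dihedral group commuting with `x`, because `x · y (x y)^(λ-1) = (x y)^λ` is central there.
Conjugating by `p_γ` transports both facts to `r_{γ,u}` and `t₀`.
-/

section Dihedral

variable {G : Type*} [Group G] {x y : G}

theorem inv_mul_eq_mul_of_inv_eq_self (hx : x⁻¹ = x) (hy : y⁻¹ = y) : (x * y)⁻¹ = y * x := by
  rw [mul_inv_rev, hx, hy]

theorem inv_pow_mul_mul_pow_eq_of_pow_odd (hx : x⁻¹ = x) (hy : y⁻¹ = y) {l : ℕ}
    (h : (x * y) ^ (2 * l + 1) = 1) : ((y * x) ^ l)⁻¹ * x * (y * x) ^ l = y := by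
  have hsq : (x * y) ^ (2 * l) = y * x := by
    rw [← inv_mul_eq_mul_of_inv_eq_self hx hy, eq_inv_iff_mul_eq_one, ← pow_succ, h]
  calc ((y * x) ^ l)⁻¹ * x * (y * x) ^ l
      = (x * y) ^ l * ((x * y) ^ l * x) := by
        rw [← inv_pow, inv_mul_eq_mul_of_inv_eq_self hy hx, mul_assoc, ← mul_pow_mul]
    _ = (x * y) ^ (2 * l) * x := by rw [two_mul, pow_add, mul_assoc]
    _ = y := by rw [hsq, mul_assoc, mul_eq_one_iff_eq_inv.2 hx.symm, mul_one]

theorem inv_mul_mul_pow_eq_self (hx : x⁻¹ = x) (hy : y⁻¹ = y) (k : ℕ) :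
    (y * (x * y) ^ k)⁻¹ = y * (x * y) ^ k := by
  rw [mul_inv_rev, ← inv_pow, inv_mul_eq_mul_of_inv_eq_self hx hy, hy, ← mul_pow_mul]

theorem commute_mul_mul_pow_of_pow_even (hx : x⁻¹ = x) (hy : y⁻¹ = y) {k : ℕ}
    (h : (x * y) ^ (2 * (k + 1)) = 1) : Commute (y * (x * y) ^ k) x := by
  have hcentral : (y * x) ^ (k + 1) = (x * y) ^ (k + 1) := by
    rw [← inv_mul_eq_mul_of_inv_eq_self hx hy, inv_pow, inv_eq_iff_mul_eq_one, ← pow_add,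
      ← two_mul, h]
  calc y * (x * y) ^ k * x = (y * x) ^ (k + 1) := by
        rw [mul_assoc, mul_pow_mul, ← mul_assoc, ← pow_succ']
    _ = x * (y * (x * y) ^ k) := by rw [hcentral, ← mul_assoc, pow_succ']

end Dihedral

theorem inv_prod_ofFn_mul_mul_prod_ofFn_eq_last {G : Type*} [Group G] {n : ℕ}
    (s : Fin (n + 1) → G) (l : Fin n → ℕ) (hs : ∀ i, (s i)⁻¹ = s i)
    (h : ∀ k : Fin n, (s k.castSucc * s k.succ) ^ (2 * l k + 1) = 1) :
    (List.ofFn fun k : Fin n => (s k.succ * s k.castSucc) ^ l k).prod⁻¹ * s 0 *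
      (List.ofFn fun k : Fin n => (s k.succ * s k.castSucc) ^ l k).prod = s (Fin.last n) := by
  induction n with
  | zero => simp
  | succ n ih =>
    have hinit := ih (Fin.init s) (Fin.init l) (fun i => hs _) (fun k => h k.castSucc)
    simp only [Fin.init, Fin.castSucc_zero] at hinit
    rw [List.ofFn_succ', List.prod_concat, mul_inv_rev]
    simp only [Fin.succ_castSucc]
    set q := (s (Fin.last n).succ * s (Fin.last n).castSucc) ^ l (Fin.last n)
    calc _ = q⁻¹ * s (Fin.last n).castSucc * q := by rw [← hinit]; group
      _ = s (Fin.last (n + 1)) := inv_pow_mul_mul_pow_eq_of_pow_odd (hs _) (hs _) (h _)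

/-- Let `(W, S)` be a Coxeter system, `γ = (t₀, …, t_n)` a sequence in `S` with each
`m(t_{i-1}, t_i)` odd, and `u ∈ S` with `m(t_n, u) = 2λ` even and finite (`λ ≥ 1`).  Then
`r_{γ,u} := p_γ · u (t_n u)^{λ-1} · p_γ⁻¹` is an involution commuting with `t₀`, where
`p_γ := (t₁ t₀)^{l₁} ⋯ (t_n t_{n-1})^{l_n}`. -/
theorem r_gamma_u_is_involution_commuting
    {B W : Type*} [Group W] {M : CoxeterMatrix B} (cs : CoxeterSystem M W)
    (n : ℕ) (t : Fin (n + 1) → B) (l : Fin n → ℕ)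
    (hodd : ∀ k : Fin n,
      orderOf (cs.simple (t k.castSucc) * cs.simple (t k.succ)) = 2 * l k + 1)
    (u : B) (lam : ℕ) (hlam : 1 ≤ lam)
    (heven : orderOf (cs.simple (t (Fin.last n)) * cs.simple u) = 2 * lam)
    (p : W)
    (hp : p = (List.ofFn fun k : Fin n =>
      (cs.simple (t k.succ) * cs.simple (t k.castSucc)) ^ l k).prod)
    (r : W)
    (hr : r = p * (cs.simple u *
      (cs.simple (t (Fin.last n)) * cs.simple u) ^ (lam - 1)) * p⁻¹) :
    r * r = 1 ∧ r * cs.simple (t 0) = cs.simple (t 0) * r := by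
  obtain ⟨k, rfl⟩ := Nat.exists_eq_add_of_le' hlam
  have ht₀ : cs.simple (t 0) = MulAut.conj p (cs.simple (t (Fin.last n))) := by
    have hconj := inv_prod_ofFn_mul_mul_prod_ofFn_eq_last (fun i => cs.simple (t i)) l
      (fun _ => cs.inv_simple _) (fun k => hodd k ▸ pow_orderOf_eq_one _)
    beta_reduce at hconj
    rw [MulAut.conj_apply, hp, ← hconj]
    group
  rw [Nat.add_sub_cancel, ← MulAut.conj_apply] at hr
  subst hr
  rw [ht₀, mul_eq_one_iff_eq_inv, ← map_inv, inv_mul_mul_pow_eq_self (cs.inv_simple _)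
    (cs.inv_simple _)]
  exact ⟨rfl, (commute_mul_mul_pow_of_pow_even (cs.inv_simple _) (cs.inv_simple _)
    (heven ▸ pow_orderOf_eq_one _)).map (MulAut.conj p)⟩
end

section
/- Let (W, S) be a Coxeter system and γ a closed path (t₀, t₁, …, t_n = t₀) in S with each m(t_{i-1}, t_i) odd. Then p_γ := (t₁t₀)^{l₁}⋯(t_n t_{n-1})^{l_n} lies in the centralizer of t₀ in W. -/
/-!
For involutions `s, t` with `(s t)^{2l+1} = 1`, the braid relation of odd length says
`(t s)^l` conjugates `s` into `t`. Along the path the blocks `(tᵢ tᵢ₋₁)^{lᵢ}` therefore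
conjugate `t₀` into `t₁`, then `t₁` into `t₂`, and so on, so `p_γ` conjugates `t₀` into
`t_n = t₀`, i.e. commutes with it.
-/

theorem SemiconjBy.list_prod_ofFn {G : Type*} [Monoid G] {n : ℕ} {x : Fin (n + 1) → G}
    {g : Fin n → G} (h : ∀ k, SemiconjBy (g k) (x k.succ) (x k.castSucc)) :
    SemiconjBy (List.ofFn g).prod (x (Fin.last n)) (x 0) := by
  induction n with
  | zero => exact SemiconjBy.one_left _
  | succ n ih =>
    rw [List.ofFn_succ, List.prod_cons]
    exact (h 0).mul_left (ih (x := fun k => x k.succ) fun k => h k.succ)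

theorem semiconjBy_mul_pow_of_pow_odd_eq_one {G : Type*} [Group G] {s t : G}
    (hs : s⁻¹ = s) (ht : t⁻¹ = t) {l : ℕ} (h : (s * t) ^ (2 * l + 1) = 1) :
    SemiconjBy ((t * s) ^ l) t s := by
  have hts : SemiconjBy t (s * t) (t * s) := by simp only [SemiconjBy, mul_assoc]
  have hst : SemiconjBy s (t * s) (s * t) := by simp only [SemiconjBy, mul_assoc]
  have hinv : ((s * t) ^ l)⁻¹ = (t * s) ^ l := by rw [← inv_pow, mul_inv_rev, hs, ht]
  have hprod : (s * t) ^ l * s * (t * (s * t) ^ l) = 1 := by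
    rw [← h, show 2 * l + 1 = l + 1 + l by ring, pow_add, pow_succ]
    simp only [mul_assoc]
  calc (t * s) ^ l * t = t * (s * t) ^ l := ((hts.pow_right l).eq).symm
    _ = (s * t) ^ l * s := by
      rw [eq_inv_of_mul_eq_one_left hprod, mul_inv_rev, hinv, ht, (hts.pow_right l).eq]
    _ = s * (t * s) ^ l := ((hst.pow_right l).eq).symm

/-- Let `(W, S)` be a Coxeter system and `γ = (t₀, …, t_n)` a closed path in `S`
(`t_n = t₀`) along which every `m(t_{i-1}, t_i) = 2 lᵢ + 1` is odd.  Then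
`p_γ := (t₁ t₀)^{l₁} ⋯ (t_n t_{n-1})^{l_n}` lies in the centralizer of `t₀`. -/
theorem p_gamma_closed_path_centralizes
    {B W : Type*} [Group W] {M : CoxeterMatrix B} (cs : CoxeterSystem M W)
    (n : ℕ) (t : Fin (n + 1) → B) (l : Fin n → ℕ)
    (hclosed : t (Fin.last n) = t 0)
    (hodd : ∀ k : Fin n,
      orderOf (cs.simple (t k.castSucc) * cs.simple (t k.succ)) = 2 * l k + 1)
    (p : W)
    (hp : p = (List.ofFn fun k : Fin n =>
      (cs.simple (t k.succ) * cs.simple (t k.castSucc)) ^ l k).prod) :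
    p ∈ Subgroup.centralizer {cs.simple (t 0)} := by
  have hconj : SemiconjBy p (cs.simple (t (Fin.last n))) (cs.simple (t 0)) :=
    hp ▸ SemiconjBy.list_prod_ofFn (x := fun i => cs.simple (t i)) fun k =>
      semiconjBy_mul_pow_of_pow_odd_eq_one (cs.inv_simple _) (cs.inv_simple _)
        (hodd k ▸ pow_orderOf_eq_one _)
  rw [hclosed] at hconj
  simpa [Subgroup.mem_centralizer_iff] using hconj.eq.symm
end

section
/- Two generators s, t ∈ S of a Coxeter system (W, S) are conjugate in W if and only if they lie in the same connected component of the odd Coxeter graph, i.e., they are connected by a path s = t₀, t₁, …, t_n = t along which each m(t_{i-1}, t_i) is odd. -/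
private lemma isConj_of_odd_orderOf_mul {G : Type*} [Group G] {a b : G}
    (ha : a * a = 1) (hb : b * b = 1) (h : Odd (orderOf (a * b))) : IsConj a b := by
  obtain ⟨k, hk⟩ := h
  have hpow : (a * b) ^ (2 * k + 1) = 1 := by rw [← hk]; exact pow_orderOf_eq_one _
  have hinva : a⁻¹ = a := inv_eq_of_mul_eq_one_right ha
  have hinvb : b⁻¹ = b := inv_eq_of_mul_eq_one_right hb
  have hword : (a * b) ^ k * a = (b * a) ^ k * b := by
    rw [← mul_inv_eq_one, mul_inv_rev, hinvb, ← inv_pow, mul_inv_rev, hinva, hinvb]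
    calc (a * b) ^ k * a * (b * (a * b) ^ k)
        = (a * b) ^ (k + 1 + k) := by
          rw [pow_add, pow_add, pow_one]; simp [mul_assoc]
      _ = 1 := by rw [show k + 1 + k = 2 * k + 1 by ring]; exact hpow
  have hsc : SemiconjBy b (a * b) (b * a) := by
    show b * (a * b) = (b * a) * b; rw [mul_assoc]
  have key : (a * b) ^ k * a = b * (a * b) ^ k := by
    rw [hword]; exact (hsc.pow_right k).symm
  rw [isConj_iff]
  exact ⟨(a * b) ^ k, by rw [key, mul_inv_cancel_right]⟩

/-- Two simple generators of a Coxeter system are conjugate in `W` if and only if they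
lie in the same connected component of the odd Coxeter graph, i.e. they are connected by
a path along which each order `m(t_{i-1}, t_i)` is odd (hence finite). -/
theorem simple_conjugate_iff_odd_path
    {B W : Type*} [Group W] {M : CoxeterMatrix B} (cs : CoxeterSystem M W)
    (i j : B) :
    IsConj (cs.simple i) (cs.simple j) ↔
      ∃ (n : ℕ) (t : Fin (n + 1) → B), t 0 = i ∧ t (Fin.last n) = j ∧
        ∀ k : Fin n, Odd (orderOf (cs.simple (t k.castSucc) * cs.simple (t k.succ))) := by
  classical
  set R : B → B → Prop := fun a b => Odd (orderOf (cs.simple a * cs.simple b)) with hR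
  have hsymm : Symmetric R := by
    intro a b hab
    have hsc : SemiconjBy (cs.simple a) (cs.simple b * cs.simple a)
        (cs.simple a * cs.simple b) := by
      show cs.simple a * (cs.simple b * cs.simple a) = _; rw [mul_assoc]
    show Odd (orderOf (cs.simple b * cs.simple a))
    rwa [hsc.orderOf_eq]
  constructor
  · intro h
    let f : B → ℤˣ := fun b => if Relation.ReflTransGen R i b then -1 else 1
    have hf : M.IsLiftable f := by
      intro a b
      rcases Nat.even_or_odd (M a b) with he | ho
      · obtain ⟨r, hr⟩ := he
        rw [hr, pow_add]
        exact Int.units_mul_self _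
      · have hdvd : orderOf (cs.simple a * cs.simple b) ∣ M a b :=
          orderOf_dvd_of_pow_eq_one (cs.simple_mul_simple_pow a b)
        have hRab : R a b := by
          rcases Nat.even_or_odd (orderOf (cs.simple a * cs.simple b)) with hev | hod
          · exact absurd (even_iff_two_dvd.mpr ((even_iff_two_dvd.mp hev).trans hdvd))
              (Nat.not_even_iff_odd.mpr ho)
          · exact hod
        have hiff : Relation.ReflTransGen R i a ↔ Relation.ReflTransGen R i b :=
          ⟨fun h' => h'.tail hRab, fun h' => h'.tail (hsymm hRab)⟩
        have hfab : f a = f b := if_congr hiff rfl rfl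
        rw [hfab, Int.units_mul_self, one_pow]
    let φ := cs.lift ⟨f, hf⟩
    have h1 : φ (cs.simple i) = φ (cs.simple j) := isConj_iff_eq.mp (φ.map_isConj h)
    rw [cs.lift_apply_simple hf i, cs.lift_apply_simple hf j] at h1
    have hfi : f i = -1 := if_pos Relation.ReflTransGen.refl
    have hRTij : Relation.ReflTransGen R i j := by
      by_contra hc
      have : f j = 1 := if_neg hc
      rw [hfi, this] at h1
      exact absurd h1 (by decide)
    clear h h1 hfi
    induction hRTij with
    | refl => exact ⟨0, fun _ => i, rfl, rfl, fun k => k.elim0⟩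
    | @tail b c hb hbc ih =>
      obtain ⟨n, t, h0, hl, he⟩ := ih
      refine ⟨n + 1, Fin.snoc t c, ?_, Fin.snoc_last _ _, ?_⟩
      · rw [← Fin.castSucc_zero, Fin.snoc_castSucc, h0]
      · intro k
        refine Fin.lastCases ?_ ?_ k
        · rw [Fin.succ_last, Fin.snoc_last, Fin.snoc_castSucc, hl]
          exact hbc
        · intro m
          rw [Fin.succ_castSucc, Fin.snoc_castSucc, Fin.snoc_castSucc]
          exact he m
  · rintro ⟨n, t, h0, hl, he⟩
    have key : ∀ k : Fin (n + 1), IsConj (cs.simple (t 0)) (cs.simple (t k)) := by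
      intro k
      induction k using Fin.induction with
      | zero => exact IsConj.refl _
      | succ m ih =>
        exact ih.trans (isConj_of_odd_orderOf_mul (cs.simple_mul_simple_self _)
          (cs.simple_mul_simple_self _) (he m))
    have := key (Fin.last n)
    rwa [h0, hl] at this
end

section
/- Let (W, S) be a Coxeter system and s ∈ S. Then the centralizer C_W(s) decomposes as C_W(s) = ⟨s⟩ × H, where H is the subgroup of C_W(s) consisting of elements preserving each of the two half-spaces bounded by the reflection hyperplane of s in the standard geometric representation; equivalently, C_W(s) ≅ (Z/2) × H where ⟨s⟩ ∩ H = 1 and every element of C_W(s) is uniquely a product of an element of ⟨s⟩ and one of H. -/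
/-! An element `w` commuting with `s = sᵢ` preserves the `-1`-eigenline `ℝ αᵢ` of `ρ s`, so
`ρ w αᵢ = ε αᵢ`; invariance of the form gives `ε² = 1` and `⟨αᵢ, ρ w v⟩ = ε ⟨αᵢ, v⟩`. Hence
`w ↦ ε` is multiplicative on `C_W(s)`, `H` is the set where `ε = 1`, and the involution `s`,
having `ε = -1`, splits `C_W(s)` as `⟨s⟩ × H`. -/

/-- The standard bilinear form of a Coxeter matrix on `B → ℝ`:
`⟨e_i, e_j⟩ = -cos (π / M i j)` (with `M i j = 0` standing for `∞`, and indeed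
`-cos (π / 0) = -1` by the Lean convention `π / 0 = 0`). -/
noncomputable def geomForm {B : Type*} [Fintype B] (M : CoxeterMatrix B)
    (v w : B → ℝ) : ℝ :=
  ∑ i, ∑ j, v i * w j * (-Real.cos (Real.pi / (M i j : ℝ)))

section Complement

variable {G : Type*} [Group G]

theorem eq_one_or_eq_of_mem_zpowers {s x : G} (hs : s ^ 2 = 1) (hx : x ∈ Subgroup.zpowers s) :
    x = 1 ∨ x = s := by
  obtain ⟨k, rfl⟩ := Subgroup.mem_zpowers_iff.mp hx
  rw [zpow_eq_zpow_emod k (n := 2) (mod_cast hs)]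
  rcases Int.emod_two_eq_zero_or_one k with h | h <;> simp [h]

theorem zpowers_inf_eq_bot_of_notMem {s : G} {H : Subgroup G} (hs : s ^ 2 = 1) (hsH : s ∉ H) :
    Subgroup.zpowers s ⊓ H = ⊥ := by
  refine eq_bot_iff.mpr fun x ⟨hxs, hxH⟩ => ?_
  rcases eq_one_or_eq_of_mem_zpowers hs hxs with rfl | rfl
  · exact Subgroup.one_mem ⊥
  · exact absurd hxH hsH

theorem existsUnique_mul_of_inf_eq_bot {A H : Subgroup G} (hAH : A ⊓ H = ⊥) {w : G}
    (hw : ∃ a ∈ A, ∃ h ∈ H, w = a * h) :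
    ∃! p : G × G, p.1 ∈ A ∧ p.2 ∈ H ∧ w = p.1 * p.2 := by
  obtain ⟨a, ha, h, hh, rfl⟩ := hw
  refine ⟨(a, h), ⟨ha, hh, rfl⟩, fun ⟨a', h'⟩ ⟨ha', hh', heq⟩ => ?_⟩
  have hpair := Subgroup.mul_injective_of_disjoint (disjoint_iff.mpr hAH)
    (a₁ := (⟨a', ha'⟩, ⟨h', hh'⟩)) (a₂ := (⟨a, ha⟩, ⟨h, hh⟩)) heq.symm
  simp only [Prod.mk.injEq, Subtype.mk.injEq] at hpair
  rw [hpair.1, hpair.2]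

end Complement

section GeomForm

variable {B : Type*} [Fintype B] {M : CoxeterMatrix B}

theorem geomForm_comm (u v : B → ℝ) : geomForm M u v = geomForm M v u := by
  unfold geomForm
  rw [Finset.sum_comm]
  refine Finset.sum_congr rfl fun a _ => Finset.sum_congr rfl fun b _ => ?_
  rw [M.symmetric a b]
  ring

theorem geomForm_smul_right (u v : B → ℝ) (c : ℝ) :
    geomForm M u (c • v) = c * geomForm M u v := by
  simp only [geomForm, Finset.mul_sum, Pi.smul_apply, smul_eq_mul]
  refine Finset.sum_congr rfl fun a _ => Finset.sum_congr rfl fun b _ => ?_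
  ring

theorem geomForm_sub_right (u v w : B → ℝ) :
    geomForm M u (v - w) = geomForm M u v - geomForm M u w := by
  simp only [geomForm, ← Finset.sum_sub_distrib, Pi.sub_apply]
  refine Finset.sum_congr rfl fun a _ => Finset.sum_congr rfl fun b _ => ?_
  ring

theorem geomForm_neg_right (u v : B → ℝ) : geomForm M u (-v) = -geomForm M u v := by
  simpa using geomForm_smul_right (M := M) u v (-1)

theorem geomForm_sub_smul_left (u v w : B → ℝ) (c : ℝ) :
    geomForm M (u - c • v) w = geomForm M u w - c * geomForm M v w := by
  rw [geomForm_comm, geomForm_sub_right, geomForm_smul_right, geomForm_comm w u,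
    geomForm_comm w v]

theorem geomForm_single_self [DecidableEq B] (i : B) :
    geomForm M (Pi.single i 1) (Pi.single i 1) = 1 := by
  simp [geomForm, Pi.single_apply]

end GeomForm

section GeometricRepresentation

variable {B : Type*} [Fintype B] [DecidableEq B] {W : Type*} [Group W] {M : CoxeterMatrix B}

def IsGeometricRepresentation (cs : CoxeterSystem M W)
    (ρ : W →* ((B → ℝ) →ₗ[ℝ] (B → ℝ))) : Prop :=
  ∀ (i : B) (v : B → ℝ), ρ (cs.simple i) v =
    v - (2 * geomForm M (Pi.single i 1) v) • (Pi.single i 1 : B → ℝ)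

/-- On the centralizer of `sᵢ` this is the eigenvalue `±1` of `ρ w` on `αᵢ`; it is `1` exactly
when `w` preserves the two half-spaces bounded by the fixed hyperplane of `sᵢ`. -/
noncomputable def rootSign (M : CoxeterMatrix B) (ρ : W →* ((B → ℝ) →ₗ[ℝ] (B → ℝ))) (i : B)
    (w : W) : ℝ :=
  geomForm M (Pi.single i 1) (ρ w (Pi.single i 1))

theorem rootSign_one (ρ : W →* ((B → ℝ) →ₗ[ℝ] (B → ℝ))) (i : B) : rootSign M ρ i 1 = 1 := by
  simp [rootSign, geomForm_single_self]

namespace IsGeometricRepresentation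

variable {cs : CoxeterSystem M W} {ρ : W →* ((B → ℝ) →ₗ[ℝ] (B → ℝ))}

theorem geomForm_apply (hρ : IsGeometricRepresentation cs ρ) (w : W) (u v : B → ℝ) :
    geomForm M (ρ w u) (ρ w v) = geomForm M u v := by
  induction w using cs.simple_induction generalizing u v with
  | simple j =>
    rw [hρ j u, hρ j v, geomForm_sub_smul_left, geomForm_sub_right, geomForm_sub_right,
      geomForm_smul_right, geomForm_smul_right, geomForm_single_self,
      geomForm_comm u (Pi.single j 1)]
    ring
  | one => simp
  | mul x y hx hy => simp only [map_mul, Module.End.mul_apply, hx, hy]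

theorem simple_apply_single (hρ : IsGeometricRepresentation cs ρ) (i : B) :
    ρ (cs.simple i) (Pi.single i 1) = -Pi.single i 1 := by
  rw [hρ, geomForm_single_self, mul_one, two_smul, sub_add_cancel_left]

theorem eq_smul_single_of_simple_apply_eq_neg (hρ : IsGeometricRepresentation cs ρ) {i : B}
    {u : B → ℝ} (hu : ρ (cs.simple i) u = -u) :
    u = geomForm M (Pi.single i 1) u • Pi.single i 1 := by
  rw [hρ] at hu
  have h2 : (2 : ℝ) • u = (2 : ℝ) • (geomForm M (Pi.single i 1) u • Pi.single i 1) := by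
    linear_combination (norm := module) hu
  exact smul_right_injective _ two_ne_zero h2

theorem apply_single_of_mem_centralizer (hρ : IsGeometricRepresentation cs ρ) {i : B} {w : W}
    (hw : w ∈ Subgroup.centralizer {cs.simple i}) :
    ρ w (Pi.single i 1) = rootSign M ρ i w • Pi.single i 1 := by
  refine hρ.eq_smul_single_of_simple_apply_eq_neg ?_
  rw [← Module.End.mul_apply, ← map_mul, ← Subgroup.mem_centralizer_singleton_iff.mp hw,
    map_mul, Module.End.mul_apply, hρ.simple_apply_single, map_neg]

theorem rootSign_mul_self (hρ : IsGeometricRepresentation cs ρ) {i : B} {w : W}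
    (hw : w ∈ Subgroup.centralizer {cs.simple i}) :
    rootSign M ρ i w * rootSign M ρ i w = 1 := by
  have h := hρ.geomForm_apply w (Pi.single i 1) (Pi.single i 1)
  rwa [hρ.apply_single_of_mem_centralizer hw, geomForm_smul_right, geomForm_comm,
    geomForm_smul_right, geomForm_single_self, mul_one] at h

theorem geomForm_single_apply_of_mem_centralizer (hρ : IsGeometricRepresentation cs ρ) {i : B}
    {w : W} (hw : w ∈ Subgroup.centralizer {cs.simple i}) (v : B → ℝ) :
    geomForm M (Pi.single i 1) (ρ w v) = rootSign M ρ i w * geomForm M (Pi.single i 1) v := by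
  have h := hρ.geomForm_apply w (Pi.single i 1) v
  rw [hρ.apply_single_of_mem_centralizer hw, geomForm_comm, geomForm_smul_right,
    geomForm_comm] at h
  rw [← h, ← mul_assoc, hρ.rootSign_mul_self hw, one_mul]

theorem rootSign_mul (hρ : IsGeometricRepresentation cs ρ) {i : B} {x : W}
    (hx : x ∈ Subgroup.centralizer {cs.simple i}) (y : W) :
    rootSign M ρ i (x * y) = rootSign M ρ i x * rootSign M ρ i y := by
  rw [rootSign, map_mul, Module.End.mul_apply,
    hρ.geomForm_single_apply_of_mem_centralizer hx]
  rfl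

theorem rootSign_simple (hρ : IsGeometricRepresentation cs ρ) (i : B) :
    rootSign M ρ i (cs.simple i) = -1 := by
  rw [rootSign, hρ.simple_apply_single, geomForm_neg_right, geomForm_single_self]

theorem preserves_halfSpace_iff (hρ : IsGeometricRepresentation cs ρ) {i : B} {w : W}
    (hw : w ∈ Subgroup.centralizer {cs.simple i}) :
    (∀ v, 0 < geomForm M (Pi.single i 1) v → 0 < geomForm M (Pi.single i 1) (ρ w v)) ↔
      rootSign M ρ i w = 1 := by
  constructor
  · intro h
    have hpos : 0 < rootSign M ρ i w := h _ (by rw [geomForm_single_self]; exact one_pos)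
    rcases mul_self_eq_one_iff.mp (hρ.rootSign_mul_self hw) with h1 | h1
    · exact h1
    · linarith
  · intro h v hv
    rwa [hρ.geomForm_single_apply_of_mem_centralizer hw, h, one_mul]

def halfSpaceStabilizer (hρ : IsGeometricRepresentation cs ρ) (i : B) : Subgroup W where
  carrier := {w | w ∈ Subgroup.centralizer {cs.simple i} ∧
    ∀ v : B → ℝ, 0 < geomForm M (Pi.single i 1) v → 0 < geomForm M (Pi.single i 1) (ρ w v)}
  one_mem' := ⟨Subgroup.one_mem _, fun v hv => by simpa using hv⟩
  mul_mem' := fun ⟨hx, hxv⟩ ⟨hy, hyv⟩ =>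
    ⟨Subgroup.mul_mem _ hx hy, fun v hv => by
      rw [map_mul, Module.End.mul_apply]
      exact hxv _ (hyv v hv)⟩
  inv_mem' := fun {w} ⟨hw, hwv⟩ => by
    have hw' := Subgroup.inv_mem _ hw
    refine ⟨hw', (hρ.preserves_halfSpace_iff hw').mpr ?_⟩
    have h := hρ.rootSign_mul hw w⁻¹
    rwa [mul_inv_cancel, rootSign_one, (hρ.preserves_halfSpace_iff hw).mp hwv, one_mul,
      eq_comm] at h

theorem mem_halfSpaceStabilizer_iff (hρ : IsGeometricRepresentation cs ρ) {i : B} {w : W} :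
    w ∈ hρ.halfSpaceStabilizer i ↔
      w ∈ Subgroup.centralizer {cs.simple i} ∧ rootSign M ρ i w = 1 :=
  ⟨fun ⟨hw, hwv⟩ => ⟨hw, (hρ.preserves_halfSpace_iff hw).mp hwv⟩,
    fun ⟨hw, hsign⟩ => ⟨hw, (hρ.preserves_halfSpace_iff hw).mpr hsign⟩⟩

theorem simple_notMem_halfSpaceStabilizer (hρ : IsGeometricRepresentation cs ρ) (i : B) :
    cs.simple i ∉ hρ.halfSpaceStabilizer i := by
  rw [hρ.mem_halfSpaceStabilizer_iff, hρ.rootSign_simple]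
  norm_num

theorem mem_halfSpaceStabilizer_or_simple_mul_mem (hρ : IsGeometricRepresentation cs ρ) {i : B}
    {w : W} (hw : w ∈ Subgroup.centralizer {cs.simple i}) :
    w ∈ hρ.halfSpaceStabilizer i ∨ cs.simple i * w ∈ hρ.halfSpaceStabilizer i := by
  have hs : cs.simple i ∈ Subgroup.centralizer {cs.simple i} :=
    Subgroup.mem_centralizer_singleton_iff.mpr rfl
  simp only [hρ.mem_halfSpaceStabilizer_iff, hρ.rootSign_mul hs, hρ.rootSign_simple]
  rcases mul_self_eq_one_iff.mp (hρ.rootSign_mul_self hw) with h | h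
  · exact .inl ⟨hw, h⟩
  · exact .inr ⟨Subgroup.mul_mem _ hs hw, by rw [h]; norm_num⟩

end IsGeometricRepresentation

end GeometricRepresentation

/-- Let `(W, S)` be a Coxeter system, `ρ` its standard geometric representation on
`V = ℝ^S` (characterized by `ρ(sᵢ) v = v - 2⟨αᵢ, v⟩ αᵢ`), and `s = sᵢ ∈ S`.  Then
`C_W(s) = ⟨s⟩ × H`, where `H` is the subgroup of the centralizer consisting of elements
preserving each of the two open half-spaces bounded by the reflection hyperplane `V^s`:
`⟨s⟩ ∩ H = 1` and every element of `C_W(s)` is uniquely a product of an element of `⟨s⟩`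
and one of `H`. -/
theorem centralizer_decomposition
    {B : Type*} [Fintype B] [DecidableEq B] {W : Type*} [Group W]
    {M : CoxeterMatrix B} (cs : CoxeterSystem M W)
    (ρ : W →* ((B → ℝ) →ₗ[ℝ] (B → ℝ)))
    (hρ : ∀ (i : B) (v : B → ℝ), ρ (cs.simple i) v =
      v - (2 * geomForm M (Pi.single i 1) v) • (Pi.single i 1 : B → ℝ))
    (i : B) :
    ∃ H : Subgroup W,
      (H : Set W) = {w | w ∈ Subgroup.centralizer {cs.simple i} ∧
          ∀ v : B → ℝ, 0 < geomForm M (Pi.single i 1) v →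
            0 < geomForm M (Pi.single i 1) (ρ w v)} ∧
      Subgroup.zpowers (cs.simple i) ⊓ H = ⊥ ∧
      ∀ w ∈ Subgroup.centralizer {cs.simple i},
        ∃! p : W × W, p.1 ∈ Subgroup.zpowers (cs.simple i) ∧ p.2 ∈ H ∧ w = p.1 * p.2 := by
  have hρ' : IsGeometricRepresentation cs ρ := hρ
  have hbot := zpowers_inf_eq_bot_of_notMem (cs.simple_sq i)
    (hρ'.simple_notMem_halfSpaceStabilizer i)
  refine ⟨hρ'.halfSpaceStabilizer i, rfl, hbot, fun w hw => ?_⟩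
  refine existsUnique_mul_of_inf_eq_bot hbot ?_
  rcases hρ'.mem_halfSpaceStabilizer_or_simple_mul_mem hw with h | h
  · exact ⟨1, Subgroup.one_mem _, w, h, (one_mul w).symm⟩
  · refine ⟨_, Subgroup.mem_zpowers _, _, h, ?_⟩
    rw [← mul_assoc, cs.simple_mul_simple_self, one_mul]
end

section
/- Let (W, S) be a Coxeter system. The W-stabilizer of any point of the (open) Tits cone is generated by the reflections of W fixing that point. -/
/-- The contragredient (dual) action of `w : W` on the dual of `V = B → ℝ`, written in
coordinates: a functional `f` with coordinates `c i = f(αᵢ)` is sent to the functional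
`f ∘ ρ(w⁻¹)`, whose coordinates are `i ↦ ∑ j, ρ(w⁻¹)(αᵢ)_j · c j`. -/
noncomputable def dualAct {B : Type*} [Fintype B] [DecidableEq B] {W : Type*} [Group W]
    (ρ : W →* ((B → ℝ) →ₗ[ℝ] (B → ℝ))) (w : W) (c : B → ℝ) : B → ℝ :=
  fun i => ∑ j, ρ w⁻¹ (Pi.single i 1) j * c j

section Aux

variable {B : Type*} [Fintype B] [DecidableEq B] {W : Type*} [Group W]
  {M : CoxeterMatrix B} (cs : CoxeterSystem M W)
  (ρ : W →* ((B → ℝ) →ₗ[ℝ] (B → ℝ)))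

local notation "α" => fun i => (Pi.single i 1 : B → ℝ)

lemma geomForm_single_left (i : B) (v : B → ℝ) :
    geomForm M (Pi.single i 1) v = ∑ j, v j * (-Real.cos (Real.pi / (M i j : ℝ))) := by
  unfold geomForm
  rw [Finset.sum_eq_single i]
  · simp
  · intro b _ hb
    simp [Pi.single_apply, hb]
  · simp

lemma geomForm_single_single (i j : B) :
    geomForm M (Pi.single i 1) (Pi.single j 1) = -Real.cos (Real.pi / (M i j : ℝ)) := by
  rw [geomForm_single_left, Finset.sum_eq_single j]
  · simp
  · intro b _ hb; simp [Pi.single_apply, hb]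
  · simp

lemma geomForm_single_same (i : B) : geomForm M (Pi.single i 1) (Pi.single i 1 : B → ℝ) = 1 := by
  rw [geomForm_single_single]
  simp [CoxeterMatrix.diagonal]

-- pairing lemma : ∑ j, (dualAct ρ w c) j * v j = ∑ j, c j * (ρ w⁻¹ v) j
lemma dualAct_pair (w : W) (c v : B → ℝ) :
    ∑ i, (dualAct ρ w c) i * v i = ∑ j, c j * (ρ w⁻¹ v) j := by
  unfold dualAct
  have hv : v = ∑ i, v i • (Pi.single i 1 : B → ℝ) := by
    simp_rw [← Pi.single_smul, smul_eq_mul, mul_one, Finset.univ_sum_single]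
  conv_rhs => rw [hv]
  rw [map_sum]
  simp_rw [Finset.sum_apply, Finset.mul_sum, LinearMap.map_smul, Pi.smul_apply, smul_eq_mul]
  rw [Finset.sum_comm]
  congr 1
  ext i
  rw [Finset.sum_mul]
  congr 1
  ext j
  ring

lemma dualAct_apply (w : W) (c : B → ℝ) (i : B) :
    dualAct ρ w c i = ∑ j, c j * (ρ w⁻¹ (Pi.single i 1)) j := by
  unfold dualAct; congr 1; ext j; ring

@[simp] lemma dualAct_one (c : B → ℝ) : dualAct ρ 1 c = c := by
  ext i
  rw [dualAct_apply]
  simp only [inv_one, map_one, Module.End.one_apply]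
  rw [Finset.sum_eq_single i] <;> simp (config := {contextual := true}) [Pi.single_apply,
    Ne.symm]

lemma dualAct_mul (g h : W) (c : B → ℝ) :
    dualAct ρ (g * h) c = dualAct ρ g (dualAct ρ h c) := by
  ext i
  rw [dualAct_apply, dualAct_apply, dualAct_pair, mul_inv_rev, map_mul,
    Module.End.mul_apply]

lemma dualAct_inv (g : W) (c d : B → ℝ) (h : dualAct ρ g c = d) : dualAct ρ g⁻¹ d = c := by
  rw [← h, ← dualAct_mul, inv_mul_cancel, dualAct_one]


variable (hρ : ∀ (i : B) (v : B → ℝ), ρ (cs.simple i) v =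
      v - (2 * geomForm M (Pi.single i 1) v) • (Pi.single i 1 : B → ℝ))

local prefix:100 "ℓ" => cs.length
local prefix:100 "s" => cs.simple
local prefix:100 "π" => cs.wordProd

lemma descent_length {w : W} {i : B} (h : cs.IsRightDescent w i) :
    ℓ (w * s i) + 1 = ℓ w := by
  rcases cs.length_mul_simple w i with h' | h'
  · exact absurd h (by rw [CoxeterSystem.IsRightDescent, h']; omega)
  · exact h'

lemma coset_decomp (i j : B) : ∀ (n : ℕ) (w : W), ℓ w ≤ n →
    ∃ (u : W) (ω : List B), (∀ l ∈ ω, l = i ∨ l = j) ∧ w = u * π ω ∧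
      ℓ w = ℓ u + ω.length ∧ ¬ cs.IsRightDescent u i ∧ ¬ cs.IsRightDescent u j := by
  intro n
  induction n with
  | zero =>
      intro w hw
      have hw1 : w = 1 := cs.length_eq_zero_iff.mp (Nat.le_zero.mp hw)
      subst hw1
      exact ⟨1, [], by simp, by simp, by simp, cs.not_isRightDescent_one i,
        cs.not_isRightDescent_one j⟩
  | succ n ih =>
      intro w hw
      by_cases hdi : cs.IsRightDescent w i
      · obtain ⟨u, ω, hmem, hprod, hl, hui, huj⟩ := ih (w * s i)
          (by have := descent_length cs hdi; omega)
        refine ⟨u, ω.concat i, ?_, ?_, ?_, hui, huj⟩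
        · intro l hl'
          rw [List.concat_eq_append, List.mem_append, List.mem_singleton] at hl'
          rcases hl' with h | h
          · exact hmem l h
          · exact Or.inl h
        · rw [cs.wordProd_concat, ← mul_assoc, ← hprod, CoxeterSystem.simple_mul_simple_cancel_right]
        · rw [List.length_concat, ← descent_length cs hdi, hl]
          omega
      · by_cases hdj : cs.IsRightDescent w j
        · obtain ⟨u, ω, hmem, hprod, hl, hui, huj⟩ := ih (w * s j)
            (by have := descent_length cs hdj; omega)
          refine ⟨u, ω.concat j, ?_, ?_, ?_, hui, huj⟩
          · intro l hl'
            rw [List.concat_eq_append, List.mem_append, List.mem_singleton] at hl'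
            rcases hl' with h | h
            · exact hmem l h
            · exact Or.inr h
          · rw [cs.wordProd_concat, ← mul_assoc, ← hprod,
              CoxeterSystem.simple_mul_simple_cancel_right]
          · rw [List.length_concat, ← descent_length cs hdj, hl]
            omega
        · exact ⟨w, [], by simp, by simp, by simp, hdi, hdj⟩

lemma reduced_two_letter {i j : B} (hij : i ≠ j) : ∀ (ω : List B),
    (∀ l ∈ ω, l = i ∨ l = j) → cs.IsReduced ω →
    ω = CoxeterSystem.alternatingWord i j ω.length ∨
      ω = CoxeterSystem.alternatingWord j i ω.length := by
  intro ω
  induction ω using List.reverseRecOn with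
  | nil => intro _ _; left; rfl
  | append_singleton ω₀ l ihω =>
      intro hmem hred
      have hω₀mem : ∀ l ∈ ω₀, l = i ∨ l = j := fun l hl => hmem l (List.mem_append_left _ hl)
      have hω₀red : cs.IsReduced ω₀ := by
        have := hred.take ω₀.length
        rwa [List.take_left] at this
      have hcat : ω₀ ++ [l] = ω₀.concat l := (List.concat_eq_append).symm
      -- helper: a reduced word cannot end with two equal letters
      have hnodup : ∀ (σ : List B) (x : B), ω₀ = σ.concat x → l ≠ x := by
        intro σ x hσ hlx
        subst hlx
        have : π (ω₀ ++ [l]) = π σ := by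
          rw [hσ, cs.wordProd_append, cs.wordProd_singleton, List.concat_eq_append,
            cs.wordProd_append, cs.wordProd_singleton, mul_assoc,
            CoxeterSystem.simple_mul_simple_self, mul_one]
        have hlen : ℓ (π (ω₀ ++ [l])) ≤ σ.length := this ▸ cs.length_wordProd_le σ
        have : (ω₀ ++ [l]).length = σ.length + 2 := by
          rw [hσ]; simp
        rw [hred] at *
        omega
      rcases ihω hω₀mem hω₀red with h₀ | h₀
      · -- ω₀ = alternatingWord i j n ; ends with j when n ≥ 1
        rcases hmem l (List.mem_append_right _ (List.mem_singleton_self l)) with hl | hl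
        · -- l = i : ω = alternatingWord j i (n+1)
          right
          rw [hcat, h₀, hl]
          simp only [List.length_concat, CoxeterSystem.length_alternatingWord]
          rw [CoxeterSystem.alternatingWord_succ]
        · -- l = j
          rcases Nat.eq_zero_or_pos ω₀.length with hn | hn
          · left
            rw [List.length_eq_zero_iff] at hn
            subst hn
            rw [hl]
            simp [CoxeterSystem.alternatingWord_succ, CoxeterSystem.alternatingWord]
          · exfalso
            obtain ⟨n, hn'⟩ : ∃ n, ω₀.length = n + 1 := ⟨ω₀.length - 1, by omega⟩
            have : ω₀ = (CoxeterSystem.alternatingWord j i n).concat j := by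
              rw [h₀, hn', CoxeterSystem.alternatingWord_succ]
            exact hnodup _ _ this hl
      · rcases hmem l (List.mem_append_right _ (List.mem_singleton_self l)) with hl | hl
        · rcases Nat.eq_zero_or_pos ω₀.length with hn | hn
          · right
            rw [List.length_eq_zero_iff] at hn
            subst hn
            rw [hl]
            simp [CoxeterSystem.alternatingWord_succ, CoxeterSystem.alternatingWord]
          · exfalso
            obtain ⟨n, hn'⟩ : ∃ n, ω₀.length = n + 1 := ⟨ω₀.length - 1, by omega⟩
            have : ω₀ = (CoxeterSystem.alternatingWord i j n).concat i := by
              rw [h₀, hn', CoxeterSystem.alternatingWord_succ]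
            exact hnodup _ _ this hl
        · left
          rw [hcat, h₀, hl]
          simp only [List.length_concat, CoxeterSystem.length_alternatingWord]
          rw [CoxeterSystem.alternatingWord_succ]


lemma geomForm_single_combo {i j : B} (hij : i ≠ j) (p q : ℝ) :
    geomForm M (Pi.single i 1) (p • (Pi.single i 1 : B → ℝ) + q • (Pi.single j 1 : B → ℝ)) =
      p - q * Real.cos (Real.pi / (M i j : ℝ)) := by
  rw [geomForm_single_left]
  rw [Finset.sum_eq_add_of_mem i j (Finset.mem_univ i) (Finset.mem_univ j) hij ?_]
  · simp [Pi.single_apply, hij, hij.symm, M.diagonal i]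
    ring
  · intro b _ hb
    simp [Pi.single_apply, Ne.symm hb.1, Ne.symm hb.2]

include hρ

lemma rho_simple_combo_left {i j : B} (hij : i ≠ j) (p q : ℝ) :
    ρ (cs.simple i) (p • (Pi.single i 1 : B → ℝ) + q • (Pi.single j 1 : B → ℝ)) =
      (2 * q * Real.cos (Real.pi / (M i j : ℝ)) - p) • (Pi.single i 1 : B → ℝ)
        + q • (Pi.single j 1 : B → ℝ) := by
  rw [hρ, geomForm_single_combo hij]
  ext b
  simp only [Pi.add_apply, Pi.sub_apply, Pi.smul_apply, smul_eq_mul]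
  ring

lemma rho_simple_combo_right {i j : B} (hij : i ≠ j) (p q : ℝ) :
    ρ (cs.simple j) (p • (Pi.single i 1 : B → ℝ) + q • (Pi.single j 1 : B → ℝ)) =
      p • (Pi.single i 1 : B → ℝ)
        + (2 * p * Real.cos (Real.pi / (M i j : ℝ)) - q) • (Pi.single j 1 : B → ℝ) := by
  have := rho_simple_combo_left cs ρ hρ (Ne.symm hij) q p
  rw [M.symmetric j i] at this
  rw [add_comm, this, add_comm]

/-- The trigonometric formula for the dihedral orbit of `α i`. -/
lemma dihedral_formula {i j : B} (hij : i ≠ j) (hm : M i j ≠ 0) (k : ℕ) :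
    ρ (cs.wordProd (CoxeterSystem.alternatingWord i j k)) (Pi.single i 1 : B → ℝ) =
      ((if Even k then Real.sin ((k+1) * (Real.pi / (M i j : ℝ))) else
          Real.sin (k * (Real.pi / (M i j : ℝ)))) / Real.sin (Real.pi / (M i j : ℝ)))
        • (Pi.single i 1 : B → ℝ) +
      ((if Even k then Real.sin (k * (Real.pi / (M i j : ℝ))) else
          Real.sin ((k+1) * (Real.pi / (M i j : ℝ)))) / Real.sin (Real.pi / (M i j : ℝ)))
        • (Pi.single j 1 : B → ℝ) := by
  set θ := Real.pi / (M i j : ℝ) with hθ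
  have hm2 : 2 ≤ M i j := by
    rcases Nat.lt_or_ge (M i j) 2 with h | h
    · interval_cases h' : M.M i j
      · exact absurd rfl hm
      · exact absurd (M.off_diagonal i j hij) (by simp [h'])
    · exact h
  have hθpos : 0 < θ := by
    rw [hθ]
    apply div_pos Real.pi_pos
    exact_mod_cast Nat.lt_of_lt_of_le Nat.zero_lt_two hm2
  have hθle : θ ≤ Real.pi / 2 := by
    rw [hθ]
    apply div_le_div_of_nonneg_left Real.pi_pos.le zero_lt_two
    exact_mod_cast hm2
  have hs : 0 < Real.sin θ := Real.sin_pos_of_pos_of_lt_pi hθpos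
    (lt_of_le_of_lt hθle (by linarith [Real.pi_pos]))
  have hs' : Real.sin θ ≠ 0 := ne_of_gt hs
  induction k with
  | zero =>
      simp only [CoxeterSystem.alternatingWord, CoxeterSystem.wordProd_nil, map_one,
        Module.End.one_apply, Nat.cast_zero, Even.zero, if_true, ite_true, zero_add, one_mul,
        zero_mul, Real.sin_zero, zero_div, zero_smul, add_zero, div_self hs']
      rw [one_smul]
  | succ k ih =>
      have trig : Real.sin (((k:ℝ)+2) * θ) + Real.sin ((k:ℝ) * θ)
          = 2 * Real.sin (((k:ℝ)+1)*θ) * Real.cos θ := by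
        have h1 : ((k:ℝ)+2) * θ = (((k:ℝ)+1) * θ) + θ := by ring
        have h2 : (k:ℝ) * θ = (((k:ℝ)+1) * θ) - θ := by ring
        rw [h1, h2, Real.sin_add, Real.sin_sub]
        ring
      rw [CoxeterSystem.alternatingWord_succ', CoxeterSystem.wordProd_cons, map_mul,
        Module.End.mul_apply, ih]
      rcases Nat.even_or_odd k with he | ho
      · have hne : ¬ Even (k + 1) := by simp [Nat.even_add_one, he]
        simp only [he, hne, ite_true, ite_false, if_true, if_false]
        rw [rho_simple_combo_right cs ρ hρ hij, ← hθ]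
        push_cast
        match_scalars
        · ring
        · field_simp
          rw [show θ*((k:ℝ)+1+1) = ((k:ℝ)+2)*θ from by ring]
          linarith [trig]
      · have he' : ¬ Even k := Nat.not_even_iff_odd.mpr ho
        have hne : Even (k + 1) := Nat.even_add_one.mpr he'
        simp only [he', hne, ite_true, ite_false, if_true, if_false]
        rw [rho_simple_combo_left cs ρ hρ hij, ← hθ]
        push_cast
        match_scalars
        · field_simp
          rw [show θ*((k:ℝ)+1+1) = ((k:ℝ)+2)*θ from by ring]
          linarith [trig]
        · ring

lemma dihedral_inf {i j : B} (hij : i ≠ j) (hm : M i j = 0) (k : ℕ) :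
    ∃ p q : ℝ, 0 ≤ p ∧ 0 ≤ q ∧ (if Even k then q ≤ p else p ≤ q) ∧
      ρ (cs.wordProd (CoxeterSystem.alternatingWord i j k)) (Pi.single i 1 : B → ℝ) =
        p • (Pi.single i 1 : B → ℝ) + q • (Pi.single j 1 : B → ℝ) := by
  have hc : Real.cos (Real.pi / (M i j : ℝ)) = 1 := by
    rw [hm]; simp
  induction k with
  | zero =>
      refine ⟨1, 0, zero_le_one, le_refl 0, by simp, ?_⟩
      simp [CoxeterSystem.alternatingWord, CoxeterSystem.wordProd_nil]
  | succ k ih =>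
      obtain ⟨p, q, hp, hq, hpq, heq⟩ := ih
      rw [CoxeterSystem.alternatingWord_succ', CoxeterSystem.wordProd_cons, map_mul,
        Module.End.mul_apply, heq]
      rcases Nat.even_or_odd k with he | ho
      · have hne : ¬ Even (k + 1) := by simp [Nat.even_add_one, he]
        rw [if_pos he] at hpq
        simp only [he, ite_true, if_true]
        rw [rho_simple_combo_right cs ρ hρ hij, hc]
        exact ⟨p, 2 * p * 1 - q, hp, by linarith, by simp [hne]; linarith, rfl⟩
      · have he' : ¬ Even k := Nat.not_even_iff_odd.mpr ho
        have hne : Even (k + 1) := Nat.even_add_one.mpr he'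
        rw [if_neg he'] at hpq
        simp only [he', ite_false, if_false]
        rw [rho_simple_combo_left cs ρ hρ hij, hc]
        exact ⟨2 * q * 1 - p, q, by linarith, hq, by simp [hne]; linarith, rfl⟩

lemma dihedral_pos {i j : B} (hij : i ≠ j) (k : ℕ) (hk : M i j = 0 ∨ k < M i j) :
    ∃ p q : ℝ, 0 ≤ p ∧ 0 ≤ q ∧
      ρ (cs.wordProd (CoxeterSystem.alternatingWord i j k)) (Pi.single i 1 : B → ℝ) =
        p • (Pi.single i 1 : B → ℝ) + q • (Pi.single j 1 : B → ℝ) := by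
  rcases hk with hm | hk
  · obtain ⟨p, q, hp, hq, _, heq⟩ := dihedral_inf cs ρ hρ hij hm k
    exact ⟨p, q, hp, hq, heq⟩
  · have hm : M i j ≠ 0 := by omega
    set θ := Real.pi / (M i j : ℝ) with hθ
    have hmpos : (0:ℝ) < (M i j : ℝ) := by exact_mod_cast Nat.pos_of_ne_zero hm
    have hθpos : 0 < θ := div_pos Real.pi_pos hmpos
    have hsin : ∀ n : ℕ, n ≤ M i j → 0 ≤ Real.sin (n * θ) := by
      intro n hn
      apply Real.sin_nonneg_of_nonneg_of_le_pi
      · positivity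
      · rw [hθ]
        calc (n:ℝ) * (Real.pi / (M i j : ℝ)) ≤ (M i j : ℝ) * (Real.pi / (M i j : ℝ)) := by
              apply mul_le_mul_of_nonneg_right _ (by positivity)
              exact_mod_cast hn
          _ = Real.pi := by field_simp
    have hs : 0 < Real.sin θ := by
      apply Real.sin_pos_of_pos_of_lt_pi hθpos
      rw [hθ]
      rw [div_lt_iff₀ hmpos]
      have h2 : 2 ≤ M i j := by have := M.off_diagonal i j hij; omega
      nlinarith [Real.pi_pos, show (2:ℝ) ≤ (M i j : ℝ) from by exact_mod_cast h2]
    rw [dihedral_formula cs ρ hρ hij hm k]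
    refine ⟨_, _, ?_, ?_, rfl⟩
    · rcases Nat.even_or_odd k with he | ho
      · rw [if_pos he]
        apply div_nonneg _ hs.le
        have := hsin (k+1) hk
        push_cast at this ⊢
        exact this
      · rw [if_neg (Nat.not_even_iff_odd.mpr ho)]
        exact div_nonneg (hsin k hk.le) hs.le
    · rcases Nat.even_or_odd k with he | ho
      · rw [if_pos he]
        exact div_nonneg (hsin k hk.le) hs.le
      · rw [if_neg (Nat.not_even_iff_odd.mpr ho)]
        apply div_nonneg _ hs.le
        have := hsin (k+1) hk
        push_cast at this ⊢
        exact this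

theorem rho_nonneg : ∀ (n : ℕ) (w : W) (i : B), ℓ w ≤ n → ¬ cs.IsRightDescent w i →
    ∀ b, 0 ≤ ρ w (Pi.single i 1) b := by
  intro n
  induction n with
  | zero =>
      intro w i hw _ b
      have hw1 : w = 1 := cs.length_eq_zero_iff.mp (Nat.le_zero.mp hw)
      subst hw1
      simp only [map_one, Module.End.one_apply, Pi.single_apply]
      split <;> norm_num
  | succ n ih =>
      intro w i hw hdi b
      by_cases hw1 : w = 1
      · subst hw1
        simp only [map_one, Module.End.one_apply, Pi.single_apply]
        split <;> norm_num
      obtain ⟨j, hdj⟩ := cs.exists_rightDescent_of_ne_one hw1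
      have hij : i ≠ j := fun h => hdi (h ▸ hdj)
      obtain ⟨u, ω, hmem, hprod, hl, hui, huj⟩ := coset_decomp cs i j (ℓ w) w le_rfl
      have hωne : ω ≠ [] := by
        rintro rfl
        rw [cs.wordProd_nil, mul_one] at hprod
        exact huj (hprod ▸ hdj)
      have hωlen : 1 ≤ ω.length := List.length_pos_iff.mpr hωne
      have hred : cs.IsReduced ω := by
        have h1 : ℓ (π ω) ≤ ω.length := cs.length_wordProd_le ω
        have h2 : ℓ w ≤ ℓ u + ℓ (π ω) := hprod ▸ cs.length_mul_le u (π ω)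
        have : ω.length ≤ ℓ (π ω) := by omega
        exact le_antisymm h1 this
      -- helper : if w = u * π (alternatingWord j i (m'+1)) then i is a right descent of w
      have hdesc : ∀ m' : ℕ, w = u * π (CoxeterSystem.alternatingWord j i (m'+1)) →
          ω.length = m' + 1 → False := by
        intro m' hprod' hlen'
        apply hdi
        have : w * s i = u * π (CoxeterSystem.alternatingWord i j m') := by
          rw [hprod', CoxeterSystem.alternatingWord_succ, cs.wordProd_concat, ← mul_assoc,
            mul_assoc _ _ (s i), CoxeterSystem.simple_mul_simple_self, mul_one]
        have hle : ℓ (w * s i) ≤ ℓ u + m' := by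
          rw [this]
          calc ℓ (u * π (CoxeterSystem.alternatingWord i j m'))
              ≤ ℓ u + ℓ (π (CoxeterSystem.alternatingWord i j m')) := cs.length_mul_le _ _
            _ ≤ ℓ u + m' := by
                have := cs.length_wordProd_le (CoxeterSystem.alternatingWord i j m')
                rw [CoxeterSystem.length_alternatingWord] at this
                omega
        rw [CoxeterSystem.IsRightDescent]
        omega
      -- ω is an alternating word ending in j (i.e. of the form alternatingWord i j k)
      have halt : ω = CoxeterSystem.alternatingWord i j ω.length ∧
          (M i j = 0 ∨ ω.length < M i j) := by
        rcases reduced_two_letter cs hij ω hmem hred with h | h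
        · refine ⟨h, ?_⟩
          by_cases hM : M i j = 0
          · exact Or.inl hM
          right
          have hle : ω.length ≤ M i j := by
            by_contra hgt
            exact cs.not_isReduced_alternatingWord i j hM (by omega) (h ▸ hred)
          rcases Nat.lt_or_ge ω.length (M i j) with hlt | hge
          · exact hlt
          exfalso
          have hkM : ω.length = M i j := le_antisymm hle hge
          obtain ⟨m', hm'⟩ : ∃ m', ω.length = m' + 1 := ⟨ω.length - 1, by omega⟩
          apply hdesc m' _ hm'
          have hswap : π (CoxeterSystem.alternatingWord i j ω.length)
              = π (CoxeterSystem.alternatingWord j i ω.length) := by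
            have := cs.prod_alternatingWord_eq_prod_alternatingWord_sub i j (M i j) (by omega)
            rw [hkM]
            rw [show M i j * 2 - M i j = M i j from by omega] at this
            exact this
          rw [hprod, h, hswap, ← hm']
        · exfalso
          obtain ⟨m', hm'⟩ : ∃ m', ω.length = m' + 1 := ⟨ω.length - 1, by omega⟩
          exact hdesc m' (by rw [hprod, h, ← hm']) hm'
      obtain ⟨hω, hbound⟩ := halt
      obtain ⟨p, q, hp, hq, heq⟩ := dihedral_pos cs ρ hρ hij ω.length hbound
      have hρw : ρ w (Pi.single i 1) = p • ρ u (Pi.single i 1) + q • ρ u (Pi.single j 1) := by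
        rw [hprod, map_mul, Module.End.mul_apply, hω, heq, map_add, LinearMap.map_smul,
          LinearMap.map_smul]
      have hulen : ℓ u ≤ n := by omega
      rw [hρw]
      have h1 := ih u i hulen hui b
      have h2 := ih u j hulen huj b
      simp only [Pi.add_apply, Pi.smul_apply, smul_eq_mul]
      positivity

omit hρ in
lemma sum_single_mul (k : B) (c : B → ℝ) : ∑ j, (Pi.single k 1 : B → ℝ) j * c j = c k := by
  rw [Finset.sum_eq_single k]
  · simp
  · intro b _ hb; simp [Pi.single_apply, Ne.symm hb]
  · simp

lemma rho_simple_single (i : B) : ρ (s i) (Pi.single i 1 : B → ℝ) = -Pi.single i 1 := by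
  rw [hρ, geomForm_single_same]
  ext b
  simp only [Pi.sub_apply, Pi.smul_apply, Pi.neg_apply, smul_eq_mul]
  ring

lemma dualAct_coord_nonpos {w : W} {i : B} (h : cs.IsLeftDescent w i) (c : B → ℝ)
    (hc : ∀ b, 0 ≤ c b) : dualAct ρ w c i ≤ 0 := by
  have key : ∀ b, ρ w⁻¹ (Pi.single i 1 : B → ℝ) b ≤ 0 := by
    set u := w⁻¹ * s i with hu
    have hrw : w⁻¹ = u * s i := by
      rw [hu, CoxeterSystem.simple_mul_simple_cancel_right]
    have hnd : ¬ cs.IsRightDescent u i := by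
      intro hd
      rw [CoxeterSystem.IsRightDescent, ← hrw, cs.length_inv] at hd
      have h1 : ℓ u = ℓ (s i * w) := by
        have hinv : (w⁻¹ * s i)⁻¹ = s i * w := by
          rw [mul_inv_rev, inv_inv, cs.inv_simple]
        rw [hu, ← cs.length_inv, hinv]
      rw [h1] at hd
      exact absurd h (by rw [CoxeterSystem.IsLeftDescent]; omega)
    have hpos := rho_nonneg cs ρ hρ (ℓ u) u i le_rfl hnd
    intro b
    have : ρ w⁻¹ (Pi.single i 1 : B → ℝ) = -(ρ u (Pi.single i 1 : B → ℝ)) := by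
      rw [hrw, map_mul, Module.End.mul_apply, rho_simple_single cs ρ hρ, map_neg]
    rw [this]
    simpa using hpos b
  apply Finset.sum_nonpos
  intro b _
  exact mul_nonpos_of_nonpos_of_nonneg (key b) (hc b)

lemma fixed_of_coord_zero {i : B} {c : B → ℝ} (h : c i = 0) :
    dualAct ρ (s i) c = c := by
  ext k
  have h0 : dualAct ρ (s i) c k = ∑ j, (ρ (s i)) (Pi.single k 1) j * c j := by
    unfold dualAct
    rw [cs.inv_simple]
  rw [h0]
  simp only [hρ i (Pi.single k 1), Pi.sub_apply, Pi.smul_apply, smul_eq_mul, sub_mul]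
  rw [Finset.sum_sub_distrib, sum_single_mul]
  have h2 : ∑ j, 2 * geomForm M (Pi.single i 1) (Pi.single k 1) * (Pi.single i 1 : B → ℝ) j * c j
      = 2 * geomForm M (Pi.single i 1) (Pi.single k 1) * c i := by
    simp_rw [mul_assoc, ← Finset.mul_sum]
    rw [sum_single_mul]
  rw [h2, h, mul_zero, sub_zero]

lemma chamber_stab : ∀ (n : ℕ) (w : W) (c c' : B → ℝ), ℓ w ≤ n → (∀ b, 0 ≤ c b) →
    (∀ b, 0 ≤ c' b) → dualAct ρ w c = c' →
    c = c' ∧ w ∈ Subgroup.closure {t : W | ∃ i : B, t = s i ∧ dualAct ρ (s i) c' = c'} := by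
  intro n
  induction n with
  | zero =>
      intro w c c' hw hc hc' heq
      have hw1 : w = 1 := cs.length_eq_zero_iff.mp (Nat.le_zero.mp hw)
      subst hw1
      rw [dualAct_one] at heq
      exact ⟨heq, Subgroup.one_mem _⟩
  | succ n ih =>
      intro w c c' hw hc hc' heq
      by_cases hw1 : w = 1
      · subst hw1
        rw [dualAct_one] at heq
        exact ⟨heq, Subgroup.one_mem _⟩
      obtain ⟨i, hi⟩ := cs.exists_leftDescent_of_ne_one hw1
      have hc'i : c' i = 0 :=
        le_antisymm (heq ▸ dualAct_coord_nonpos cs ρ hρ hi c hc) (hc' i)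
      have hfix : dualAct ρ (s i) c' = c' := fixed_of_coord_zero cs ρ hρ hc'i
      have heq2 : dualAct ρ (s i * w) c = c' := by
        rw [dualAct_mul, heq, hfix]
      have hlen : ℓ (s i * w) ≤ n := by
        have := hi
        rw [CoxeterSystem.IsLeftDescent] at this
        omega
      obtain ⟨hcc, hmem⟩ := ih (s i * w) c c' hlen hc hc' heq2
      refine ⟨hcc, ?_⟩
      have : w = s i * (s i * w) := by
        rw [CoxeterSystem.simple_mul_simple_cancel_left]
      rw [this]
      exact Subgroup.mul_mem _ (Subgroup.subset_closure ⟨i, rfl, hfix⟩) hmem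

end Aux


/-- Let `(W, S)` be a Coxeter system with standard geometric representation `ρ`, acting
dually on the Tits cone (the union of the `W`-translates of the closed fundamental
chamber).  The `W`-stabilizer of any point of the interior of the Tits cone is generated
by the reflections fixing that point. -/
theorem stabilizer_generated_by_reflections
    {B : Type*} [Fintype B] [DecidableEq B] {W : Type*} [Group W]
    {M : CoxeterMatrix B} (cs : CoxeterSystem M W)
    (ρ : W →* ((B → ℝ) →ₗ[ℝ] (B → ℝ)))
    (hρ : ∀ (i : B) (v : B → ℝ), ρ (cs.simple i) v =
      v - (2 * geomForm M (Pi.single i 1) v) • (Pi.single i 1 : B → ℝ))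
    (x : B → ℝ)
    (hx : x ∈ interior (⋃ w : W, dualAct ρ w '' {c : B → ℝ | ∀ i, 0 ≤ c i})) :
    {w : W | dualAct ρ w x = x} =
      (Subgroup.closure {r : W | cs.IsReflection r ∧ dualAct ρ r x = x} : Set W) := by
  have hx' : x ∈ ⋃ w : W, dualAct ρ w '' {c : B → ℝ | ∀ i, 0 ≤ c i} := interior_subset hx
  rw [Set.mem_iUnion] at hx'
  obtain ⟨u, c, hc, hxc⟩ := hx'
  simp only [Set.mem_setOf_eq] at hc
  ext w
  simp only [Set.mem_setOf_eq, SetLike.mem_coe]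
  constructor
  · intro hw
    have hux : dualAct ρ u⁻¹ x = c := dualAct_inv ρ u c x hxc
    have hv : dualAct ρ (u⁻¹ * w * u) c = c := by
      rw [dualAct_mul, dualAct_mul, hxc, hw, hux]
    obtain ⟨-, hmem⟩ := chamber_stab cs ρ hρ (cs.length (u⁻¹ * w * u)) (u⁻¹ * w * u) c c
      le_rfl hc hc hv
    have main : ∀ v, v ∈ Subgroup.closure
        {t : W | ∃ i : B, t = cs.simple i ∧ dualAct ρ (cs.simple i) c = c} →
        u * v * u⁻¹ ∈ Subgroup.closure {r : W | cs.IsReflection r ∧ dualAct ρ r x = x} := by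
      intro v hvmem
      induction hvmem using Subgroup.closure_induction with
      | mem t ht =>
          obtain ⟨i, rfl, hfix⟩ := ht
          apply Subgroup.subset_closure
          refine ⟨(cs.isReflection_simple i).conj u, ?_⟩
          rw [dualAct_mul, dualAct_mul, hux, hfix, hxc]
      | one => simpa using Subgroup.one_mem _
      | mul a b _ _ ha hb =>
          have : u * (a * b) * u⁻¹ = (u * a * u⁻¹) * (u * b * u⁻¹) := by group
          rw [this]
          exact Subgroup.mul_mem _ ha hb
      | inv a _ ha =>
          have : u * a⁻¹ * u⁻¹ = (u * a * u⁻¹)⁻¹ := by group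
          rw [this]
          exact Subgroup.inv_mem _ ha
    have := main _ hmem
    rwa [show u * (u⁻¹ * w * u) * u⁻¹ = w from by group] at this
  · intro hw
    have hstab : Subgroup.closure {r : W | cs.IsReflection r ∧ dualAct ρ r x = x} ≤
        { carrier := {w : W | dualAct ρ w x = x}
          one_mem' := by simp only [Set.mem_setOf_eq, dualAct_one]
          mul_mem' := by
            intro a b ha hb
            simp only [Set.mem_setOf_eq] at *
            rw [dualAct_mul, hb, ha]
          inv_mem' := by
            intro a ha
            simp only [Set.mem_setOf_eq] at *
            exact dualAct_inv ρ a x x ha } := by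
      apply Subgroup.closure_le _ |>.mpr
      intro r hr
      exact hr.2
    exact hstab hw
end
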